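/- The function x(t) := ∫₀^∞ G(t,s)·p(s)·σ(s) ds is continuous on [0,∞) and differentiable at every t ∈ (0,∞), with p(t)·x'(t) = (1/D)·(a₁·∫ₜ^∞ φ(s)·p(s)·σ(s) ds − a₂·∫₀ᵗ θ(s)·p(s)·σ(s) ds); consequently p·x' is differentiable on (0,∞) and (p(t)·x'(t))' = −p(t)·σ(t) for every t > 0, i.e. x solves (1/p)(p x')' + σ = 0 on (0,∞). -/

import Mathlib

/-! The kernel factorises as `G t s = θ (min t s) * φ (max t s) / D`, so for `t ≥ 0`
`D * x t = φ t * ∫₀ᵗ θ p q + θ t * ∫ₜ^∞ φ p q`. Differentiating, the terms `± θ φ p q` cancel and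
`p x' = (a₁ ∫ₜ^∞ φ p q - a₂ ∫₀ᵗ θ p q) / D`, since `p θ' = a₁` and `p φ' = -a₂`. Differentiating
once more gives `-(a₁ φ + a₂ θ) p q / D = -p q`, because `a₁ φ + a₂ θ` is the constant `D`.
The integrability of `p q` itself, needed throughout, comes from the lower bound
`G s s ≥ b₁ b₂ / D > 0`; `θ` and `φ` are bounded, so `θ p q` and `φ p q` are integrable as well. -/

open MeasureTheory Set Filter Topology

section Primitives

variable {E : Type*} [NormedAddCommGroup E] [NormedSpace ℝ E]
  {f : ℝ → E} {a t : ℝ}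

theorem integral_Ici_eq_intervalIntegral_add (ha : IntervalIntegrable f volume a t)
    (ht : IntegrableOn f (Ici t)) :
    ∫ s in Ici a, f s = (∫ s in a..t, f s) + ∫ s in Ici t, f s := by
  rw [integral_Ici_eq_integral_Ioi, integral_Ici_eq_integral_Ioi,
    intervalIntegral.integral_interval_add_Ioi' ha (ht.mono_set Ioi_subset_Ici_self)]

theorem integral_Ici_eq_sub_intervalIntegral [CompleteSpace E] (hf : IntegrableOn f (Ici a))
    (ht : a ≤ t) :
    ∫ s in Ici t, f s = (∫ s in Ici a, f s) - ∫ s in a..t, f s := by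
  rw [integral_Ici_eq_intervalIntegral_add
    ((intervalIntegrable_iff_integrableOn_Icc_of_le ht).2 (hf.mono_set Icc_subset_Ici_self))
    (hf.mono_set (Ici_subset_Ici.2 ht)), add_sub_cancel_left]

theorem hasDerivAt_intervalIntegral_of_continuousOn_Ici [CompleteSpace E]
    (hf : ContinuousOn f (Ici a)) (ht : a < t) : HasDerivAt (fun τ => ∫ s in a..τ, f s) (f t) t :=
  intervalIntegral.integral_hasDerivAt_right
    ((hf.mono Icc_subset_Ici_self).intervalIntegrable_of_Icc ht.le)
    ((hf.mono Ioi_subset_Ici_self).stronglyMeasurableAtFilter isOpen_Ioi t ht)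
    (hf.continuousAt (Ici_mem_nhds ht))

theorem hasDerivAt_integral_Ici [CompleteSpace E] (hf : ContinuousOn f (Ici a))
    (hfi : IntegrableOn f (Ici a)) (ht : a < t) :
    HasDerivAt (fun τ => ∫ s in Ici τ, f s) (-f t) t :=
  ((hasDerivAt_intervalIntegral_of_continuousOn_Ici hf ht).const_sub _).congr_of_eventuallyEq
    (eventually_of_mem (Ici_mem_nhds ht) fun _ hτ => integral_Ici_eq_sub_intervalIntegral hfi hτ)

theorem continuousOn_intervalIntegral_of_continuousOn_Ici (hf : ContinuousOn f (Ici a)) :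
    ContinuousOn (fun τ => ∫ s in a..τ, f s) (Ici a) := by
  intro t ht
  have hat : a ≤ t + 1 := by linarith [mem_Ici.1 ht]
  have hint : IntegrableOn f (uIcc a (t + 1)) := by
    rw [uIcc_of_le hat]
    exact (hf.mono Icc_subset_Ici_self).integrableOn_Icc
  refine (intervalIntegral.continuousOn_primitive_interval hint t ?_).mono_of_mem_nhdsWithin ?_
  · rw [uIcc_of_le hat]
    exact ⟨ht, by linarith⟩
  · rw [uIcc_of_le hat, ← Ici_inter_Iic]
    exact inter_mem_nhdsWithin _ (Iic_mem_nhds (lt_add_one t))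

theorem continuousOn_integral_Ici [CompleteSpace E] (hf : ContinuousOn f (Ici a))
    (hfi : IntegrableOn f (Ici a)) :
    ContinuousOn (fun τ => ∫ s in Ici τ, f s) (Ici a) :=
  (continuousOn_const.sub (continuousOn_intervalIntegral_of_continuousOn_Ici hf)).congr
    fun _ hτ => integral_Ici_eq_sub_intervalIntegral hfi hτ

end Primitives

theorem IntegrableOn.of_mul_left_of_le {α : Type*} [MeasurableSpace α] {μ : Measure α}
    {s : Set α} {g h : α → ℝ} {c : ℝ} (hgh : IntegrableOn (fun x => g x * h x) s μ)
    (hc : 0 < c) (hg : ∀ x ∈ s, c ≤ g x) (hh : AEStronglyMeasurable h (μ.restrict s))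
    (hs : MeasurableSet s) : IntegrableOn h s μ := by
  refine Integrable.mono' (hgh.norm.const_mul c⁻¹) hh (ae_restrict_of_forall_mem hs fun x hx => ?_)
  rw [norm_mul, Real.norm_of_nonneg (hc.le.trans (hg x hx)), ← mul_assoc]
  calc ‖h x‖ = c⁻¹ * c * ‖h x‖ := by rw [inv_mul_cancel₀ hc.ne', one_mul]
    _ ≤ c⁻¹ * g x * ‖h x‖ := by gcongr; exact hg x hx

theorem IntegrableOn.continuousOn_mul_of_mapsTo_Icc {s : Set ℝ} {g r : ℝ → ℝ} {c d : ℝ}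
    (hr : IntegrableOn r s) (hs : MeasurableSet s) (hg : ContinuousOn g s)
    (hgb : MapsTo g s (Icc c d)) : IntegrableOn (fun x => g x * r x) s :=
  hr.bdd_mul (hg.aestronglyMeasurable hs)
    (ae_restrict_of_forall_mem hs fun _ hx => abs_le_max_abs_abs (hgb hx).1 (hgb hx).2)

section GreenFactors

variable {w θ φ : ℝ → ℝ} {a₁ a₂ b₁ b₂ : ℝ}

theorem hasDerivAt_of_eq_const_add_mul_intervalIntegral {t : ℝ} (hw : ContinuousOn w (Ici 0))
    (hθ : ∀ t, θ t = b₁ + a₁ * ∫ σ in (0:ℝ)..t, w σ) (ht : 0 < t) :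
    HasDerivAt θ (a₁ * w t) t := by
  rw [show θ = _ from funext hθ]
  exact ((hasDerivAt_intervalIntegral_of_continuousOn_Ici hw ht).const_mul a₁).const_add b₁

theorem hasDerivAt_of_eq_const_add_mul_integral_Ici {t : ℝ} (hw : ContinuousOn w (Ici 0))
    (hwi : IntegrableOn w (Ici 0)) (hφ : ∀ t, φ t = b₂ + a₂ * ∫ σ in Ici t, w σ) (ht : 0 < t) :
    HasDerivAt φ (-(a₂ * w t)) t := by
  rw [show φ = _ from funext hφ, ← mul_neg]
  exact ((hasDerivAt_integral_Ici hw hwi ht).const_mul a₂).const_add b₂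

theorem continuousOn_of_eq_const_add_mul_intervalIntegral (hw : ContinuousOn w (Ici 0))
    (hθ : ∀ t, θ t = b₁ + a₁ * ∫ σ in (0:ℝ)..t, w σ) : ContinuousOn θ (Ici 0) := by
  rw [show θ = _ from funext hθ]
  exact continuousOn_const.add
    (continuousOn_const.mul (continuousOn_intervalIntegral_of_continuousOn_Ici hw))

theorem continuousOn_of_eq_const_add_mul_integral_Ici (hw : ContinuousOn w (Ici 0))
    (hwi : IntegrableOn w (Ici 0)) (hφ : ∀ t, φ t = b₂ + a₂ * ∫ σ in Ici t, w σ) :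
    ContinuousOn φ (Ici 0) := by
  rw [show φ = _ from funext hφ]
  exact continuousOn_const.add (continuousOn_const.mul (continuousOn_integral_Ici hw hwi))

theorem mapsTo_Icc_of_eq_const_add_mul_intervalIntegral (hw : ∀ s ∈ Ici (0:ℝ), 0 ≤ w s)
    (hwi : IntegrableOn w (Ici 0)) (ha₁ : 0 ≤ a₁)
    (hθ : ∀ t, θ t = b₁ + a₁ * ∫ σ in (0:ℝ)..t, w σ) :
    MapsTo θ (Ici 0) (Icc b₁ (b₁ + a₁ * ∫ σ in Ici (0:ℝ), w σ)) := by
  intro t (ht : 0 ≤ t)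
  have hhead : 0 ≤ ∫ σ in (0:ℝ)..t, w σ :=
    intervalIntegral.integral_nonneg ht fun s hs => hw s hs.1
  have htail : 0 ≤ ∫ σ in Ici t, w σ :=
    setIntegral_nonneg measurableSet_Ici fun s hs => hw s (ht.trans hs)
  have hsplit := integral_Ici_eq_sub_intervalIntegral hwi ht
  rw [hθ]
  constructor <;> nlinarith

theorem mapsTo_Icc_of_eq_const_add_mul_integral_Ici (hw : ∀ s ∈ Ici (0:ℝ), 0 ≤ w s)
    (hwi : IntegrableOn w (Ici 0)) (ha₂ : 0 ≤ a₂)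
    (hφ : ∀ t, φ t = b₂ + a₂ * ∫ σ in Ici t, w σ) :
    MapsTo φ (Ici 0) (Icc b₂ (b₂ + a₂ * ∫ σ in Ici (0:ℝ), w σ)) := by
  intro t (ht : 0 ≤ t)
  have hhead : 0 ≤ ∫ σ in (0:ℝ)..t, w σ :=
    intervalIntegral.integral_nonneg ht fun s hs => hw s hs.1
  have htail : 0 ≤ ∫ σ in Ici t, w σ :=
    setIntegral_nonneg measurableSet_Ici fun s hs => hw s (ht.trans hs)
  have hsplit := integral_Ici_eq_sub_intervalIntegral hwi ht
  rw [hφ]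
  constructor <;> nlinarith

/-- `(a₁ * φ + a₂ * θ) * w = θ' * φ - θ * φ'` is the Wronskian of `θ` and `φ`. -/
theorem wronskian_eq {t : ℝ} (hwi : IntegrableOn w (Ici 0))
    (hθ : ∀ t, θ t = b₁ + a₁ * ∫ σ in (0:ℝ)..t, w σ)
    (hφ : ∀ t, φ t = b₂ + a₂ * ∫ σ in Ici t, w σ) (ht : 0 ≤ t) :
    a₁ * φ t + a₂ * θ t = a₂ * b₁ + a₁ * b₂ + a₁ * a₂ * ∫ σ in Ici (0:ℝ), w σ := by
  rw [hθ, hφ, integral_Ici_eq_sub_intervalIntegral hwi ht]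
  ring

end GreenFactors

section GreenPotential

variable {θ φ r : ℝ → ℝ} {a t : ℝ}

theorem integral_green_mul_eq {G : ℝ → ℝ → ℝ} {D : ℝ}
    (hG : ∀ t s, G t s = (1 / D) * (θ (min t s) * φ (max t s)))
    (hθr : IntegrableOn (fun s => θ s * r s) (Icc a t))
    (hφr : IntegrableOn (fun s => φ s * r s) (Ici t)) (ht : a ≤ t) :
    ∫ s in Ici a, G t s * r s =
      (φ t * (∫ s in a..t, θ s * r s) + θ t * ∫ s in Ici t, φ s * r s) / D := by
  have hhead : EqOn (fun s => G t s * r s) (fun s => 1 / D * φ t * (θ s * r s)) (Icc a t) :=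
    fun s hs => by simp only [hG, min_eq_right hs.2, max_eq_left hs.2]; ring
  have htail : EqOn (fun s => G t s * r s) (fun s => 1 / D * θ t * (φ s * r s)) (Ici t) :=
    fun s hs => by simp only [hG, min_eq_left (mem_Ici.1 hs), max_eq_right (mem_Ici.1 hs)]; ring
  rw [integral_Ici_eq_intervalIntegral_add
      ((intervalIntegrable_iff_integrableOn_Icc_of_le ht).2
        (IntegrableOn.congr_fun (hθr.const_mul _) hhead.symm measurableSet_Icc))
      (IntegrableOn.congr_fun (hφr.const_mul _) htail.symm measurableSet_Ici),
    intervalIntegral.integral_congr (by rwa [uIcc_of_le ht]),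
    setIntegral_congr_fun measurableSet_Ici htail, intervalIntegral.integral_const_mul,
    integral_const_mul]
  ring

theorem integrableOn_of_integrableOn_green_diag_mul {G : ℝ → ℝ → ℝ} {D b₁ b₂ : ℝ} {s : Set ℝ}
    (hG : ∀ t s, G t s = (1 / D) * (θ (min t s) * φ (max t s)))
    (hD : 0 < D) (hb₁ : 0 < b₁) (hb₂ : 0 < b₂) (hθ : ∀ x ∈ s, b₁ ≤ θ x) (hφ : ∀ x ∈ s, b₂ ≤ φ x)
    (hs : MeasurableSet s) (hr : ContinuousOn r s)
    (hGr : IntegrableOn (fun x => G x x * r x) s) : IntegrableOn r s := by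
  refine IntegrableOn.of_mul_left_of_le hGr (c := 1 / D * (b₁ * b₂)) (by positivity)
    (fun x hx => ?_) (hr.aestronglyMeasurable hs) hs
  rw [hG, min_self, max_self]
  exact mul_le_mul_of_nonneg_left
    (mul_le_mul (hθ x hx) (hφ x hx) hb₂.le (hb₁.le.trans (hθ x hx))) (by positivity)

theorem hasDerivAt_mul_intervalIntegral_add_mul_integral_Ici {θ' φ' : ℝ}
    (hθ : HasDerivAt θ θ' t) (hφ : HasDerivAt φ φ' t)
    (hθr : ContinuousOn (fun s => θ s * r s) (Ici a))
    (hφr : ContinuousOn (fun s => φ s * r s) (Ici a))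
    (hφri : IntegrableOn (fun s => φ s * r s) (Ici a)) (ht : a < t) :
    HasDerivAt (fun τ => φ τ * (∫ s in a..τ, θ s * r s) + θ τ * ∫ s in Ici τ, φ s * r s)
      (φ' * (∫ s in a..t, θ s * r s) + θ' * ∫ s in Ici t, φ s * r s) t := by
  refine ((hφ.mul (hasDerivAt_intervalIntegral_of_continuousOn_Ici hθr ht)).add
    (hθ.mul (hasDerivAt_integral_Ici hφr hφri ht))).congr_deriv ?_
  ring

theorem hasDerivAt_mul_integral_Ici_sub_mul_intervalIntegral {a₁ a₂ : ℝ}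
    (hθr : ContinuousOn (fun s => θ s * r s) (Ici a))
    (hφr : ContinuousOn (fun s => φ s * r s) (Ici a))
    (hφri : IntegrableOn (fun s => φ s * r s) (Ici a)) (ht : a < t) :
    HasDerivAt (fun τ => a₁ * (∫ s in Ici τ, φ s * r s) - a₂ * ∫ s in a..τ, θ s * r s)
      (-((a₁ * φ t + a₂ * θ t) * r t)) t :=
  (((hasDerivAt_integral_Ici hφr hφri ht).const_mul a₁).sub
    ((hasDerivAt_intervalIntegral_of_continuousOn_Ici hθr ht).const_mul a₂)).congr_deriv (by ring)

end GreenPotential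

theorem stmt_14_general
    (p : ℝ → ℝ)
    (hp_cont : ContinuousOn p (Ici 0))
    (hp_pos : ∀ t ∈ Ici (0:ℝ), 0 < p t)
    (hp_int : IntegrableOn (fun s => 1 / p s) (Ici 0))
    (a₁ a₂ b₁ b₂ D : ℝ)
    (ha₁ : 0 ≤ a₁) (ha₂ : 0 ≤ a₂)
    (hD : D = a₂ * b₁ + a₁ * b₂ + a₁ * a₂ * ∫ σ in Ici (0:ℝ), 1 / p σ)
    (hDpos : 0 < D)
    (θ φ : ℝ → ℝ)
    (hθ : ∀ t, θ t = b₁ + a₁ * ∫ σ in (0:ℝ)..t, 1 / p σ)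
    (hφ : ∀ t, φ t = b₂ + a₂ * ∫ σ in Ici t, 1 / p σ)
    (G : ℝ → ℝ → ℝ)
    (hG : ∀ t s, G t s = (1 / D) * (θ (min t s) * φ (max t s)))
    (hb₁' : 0 < b₁) (hb₂' : 0 < b₂)
    (q : ℝ → ℝ)
    (hq_cont : ContinuousOn q (Ici 0))
    (hq_int : IntegrableOn (fun s => G s s * p s * q s) (Ici 0))
    (x : ℝ → ℝ)
    (hx : ∀ t, x t = ∫ s in Ici (0:ℝ), G t s * p s * q s)
    :
    ContinuousOn x (Ici 0) ∧
    (∀ t > 0, HasDerivAt x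
      (1 / (D * p t) * (a₁ * (∫ s in Ici t, φ s * p s * q s)
        - a₂ * ∫ s in (0:ℝ)..t, θ s * p s * q s)) t) ∧
    (∀ t > 0, HasDerivAt (fun τ => p τ * deriv x τ) (-(p t * q t)) t)
    := by
  simp only [mul_assoc] at hq_int hx ⊢
  have hw : ContinuousOn (fun s => 1 / p s) (Ici 0) :=
    continuousOn_const.div hp_cont fun s hs => (hp_pos s hs).ne'
  have hw_nonneg : ∀ s ∈ Ici (0:ℝ), 0 ≤ 1 / p s := fun s hs => (one_div_pos.2 (hp_pos s hs)).le
  have hr : ContinuousOn (fun s => p s * q s) (Ici 0) := hp_cont.mul hq_cont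
  have hθc := continuousOn_of_eq_const_add_mul_intervalIntegral hw hθ
  have hφc := continuousOn_of_eq_const_add_mul_integral_Ici hw hp_int hφ
  have hθb := mapsTo_Icc_of_eq_const_add_mul_intervalIntegral hw_nonneg hp_int ha₁ hθ
  have hφb := mapsTo_Icc_of_eq_const_add_mul_integral_Ici hw_nonneg hp_int ha₂ hφ
  have hr_int : IntegrableOn (fun s => p s * q s) (Ici 0) :=
    integrableOn_of_integrableOn_green_diag_mul hG hDpos hb₁' hb₂' (fun _ hs => (hθb hs).1)
      (fun _ hs => (hφb hs).1) measurableSet_Ici hr hq_int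
  have hθr := IntegrableOn.continuousOn_mul_of_mapsTo_Icc hr_int measurableSet_Ici hθc hθb
  have hφr := IntegrableOn.continuousOn_mul_of_mapsTo_Icc hr_int measurableSet_Ici hφc hφb
  have hx_eq : EqOn x (fun t => (φ t * (∫ s in (0:ℝ)..t, θ s * (p s * q s)) +
      θ t * ∫ s in Ici t, φ s * (p s * q s)) / D) (Ici 0) := fun t ht =>
    (hx t).trans (integral_green_mul_eq hG (hθr.mono_set Icc_subset_Ici_self)
      (hφr.mono_set (Ici_subset_Ici.2 ht)) ht)
  have hx' : ∀ t > 0, HasDerivAt x (1 / (D * p t) * (a₁ * (∫ s in Ici t, φ s * (p s * q s))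
      - a₂ * ∫ s in (0:ℝ)..t, θ s * (p s * q s))) t := fun t ht =>
    ((hasDerivAt_mul_intervalIntegral_add_mul_integral_Ici
      (hasDerivAt_of_eq_const_add_mul_intervalIntegral hw hθ ht)
      (hasDerivAt_of_eq_const_add_mul_integral_Ici hw hp_int hφ ht)
      (hθc.mul hr) (hφc.mul hr) hφr ht).div_const D).congr_of_eventuallyEq
      (eventually_of_mem (Ici_mem_nhds ht) hx_eq) |>.congr_deriv (by ring)
  refine ⟨?_, hx', fun t ht => ?_⟩
  · exact ((hφc.mul (continuousOn_intervalIntegral_of_continuousOn_Ici (hθc.mul hr))).add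
      (hθc.mul (continuousOn_integral_Ici (hφc.mul hr) hφr))).div_const D |>.congr hx_eq
  have hpx : (fun τ => p τ * deriv x τ) =ᶠ[𝓝 t] fun τ => (a₁ * (∫ s in Ici τ, φ s * (p s * q s))
      - a₂ * ∫ s in (0:ℝ)..τ, θ s * (p s * q s)) / D :=
    eventually_of_mem (Ioi_mem_nhds ht) fun τ hτ => by
      dsimp only
      rw [(hx' τ hτ).deriv]
      field_simp [(hp_pos τ (mem_Ioi.1 hτ).le).ne']
  refine ((hasDerivAt_mul_integral_Ici_sub_mul_intervalIntegral (hθc.mul hr) (hφc.mul hr) hφr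
    ht).div_const D |>.congr_of_eventuallyEq hpx).congr_deriv ?_
  rw [wronskian_eq hp_int hθ hφ ht.le, ← hD]
  field_simp

theorem stmt_14
    (p : ℝ → ℝ)
    (hp_cont : ContinuousOn p (Ici 0))
    (hp_pos : ∀ t ∈ Ici (0:ℝ), 0 < p t)
    (hp_int : IntegrableOn (fun s => 1 / p s) (Ici 0))
    (a₁ a₂ b₁ b₂ D : ℝ)
    (ha₁ : 0 ≤ a₁) (ha₂ : 0 ≤ a₂) (hb₁ : 0 ≤ b₁) (hb₂ : 0 ≤ b₂)
    (hD : D = a₂ * b₁ + a₁ * b₂ + a₁ * a₂ * ∫ σ in Ici (0:ℝ), 1 / p σ)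
    (hDpos : 0 < D)
    (θ φ : ℝ → ℝ)
    (hθ : ∀ t, θ t = b₁ + a₁ * ∫ σ in (0:ℝ)..t, 1 / p σ)
    (hφ : ∀ t, φ t = b₂ + a₂ * ∫ σ in Ici t, 1 / p σ)
    (G : ℝ → ℝ → ℝ)
    (hG : ∀ t s, G t s = (1 / D) * (θ (min t s) * φ (max t s)))
    (hb₁' : 0 < b₁) (hb₂' : 0 < b₂)
    (q : ℝ → ℝ)
    (hq_cont : ContinuousOn q (Ici 0))
    (hq_nonneg : ∀ s ∈ Ici (0:ℝ), 0 ≤ q s)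
    (hq_int : IntegrableOn (fun s => G s s * p s * q s) (Ici 0))
    (x : ℝ → ℝ)
    (hx : ∀ t, x t = ∫ s in Ici (0:ℝ), G t s * p s * q s)
    :
    ContinuousOn x (Ici 0) ∧
    (∀ t > 0, HasDerivAt x
      (1 / (D * p t) * (a₁ * (∫ s in Ici t, φ s * p s * q s)
        - a₂ * ∫ s in (0:ℝ)..t, θ s * p s * q s)) t) ∧
    (∀ t > 0, HasDerivAt (fun τ => p τ * deriv x τ) (-(p t * q t)) t) :=
  stmt_14_general p hp_cont hp_pos hp_int a₁ a₂ b₁ b₂ D ha₁ ha₂ hD hDpos θ φ hθ hφ G hG hb₁' hb₂' q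
    hq_cont hq_int x hx
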